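/- Let G = (V⁺, V⁻; E) be a simple bipartite graph with |V⁺| > |V⁻| and nonpositive edge weights w : E → ℝ, and let G' = (V⁺, V⁻ ∪ D; E') with weights w' be obtained by adding a set D of |V⁺| − |V⁻| dummy vertices to V⁻, each joined to every vertex of V⁺ by an edge of weight 0. Let μ' be a minimum-weight perfect matching in (G', w'), let s ∈ V⁺, and let w̃' be new weights agreeing with w' on every edge not incident to s (in particular all dummy edges keep weight 0). If the auxiliary weighted graph (G'_{μ'}, w̃'_{μ'}) contains a negative cycle, then it contains a cycle of minimum weight that intersects at most one dummy vertex. -/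

import Mathlib

/-!  Common setup: weighted bipartite graphs `G = (V⁺, V⁻; E)` with `V⁺ = α`, `V⁻ = β`,
edges directed from `V⁺` to `V⁻`, auxiliary graphs of matchings, walks and cycles. -/

variable {α β : Type*}

/-- Directed adjacency of the auxiliary graph `G_μ`: non-matching edges go from `V⁺` to `V⁻`,
matching edges are reversed. -/
def auxAdj (E μ : Finset (α × β)) : α ⊕ β → α ⊕ β → Prop
  | Sum.inl u, Sum.inr v => (u, v) ∈ E ∧ (u, v) ∉ μ
  | Sum.inr v, Sum.inl u => (u, v) ∈ μ
  | _, _ => False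

/-- The auxiliary weight `w_μ`, as a function on pairs of vertices. -/
def auxW (w : α × β → ℝ) : α ⊕ β → α ⊕ β → ℝ
  | Sum.inl u, Sum.inr v => w (u, v)
  | Sum.inr v, Sum.inl u => - w (u, v)
  | _, _ => 0

/-- Weight of a walk, given by its list of vertices. -/
def walkWeight {V : Type*} (W : V → V → ℝ) (l : List V) : ℝ :=
  ((l.zip l.tail).map fun p => W p.1 p.2).sum

/-- A (simple) directed path from `s` to `t`, given by its list of vertices. -/
def IsDiPath {V : Type*} (adj : V → V → Prop) (s t : V) (l : List V) : Prop :=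
  l.head? = some s ∧ l.getLast? = some t ∧ l.Chain' adj ∧ l.Nodup

/-- A (simple) directed cycle, given by the list of its vertices (the closing edge
from the last vertex back to the first is implicit). -/
def IsDiCycle {V : Type*} (adj : V → V → Prop) (l : List V) : Prop :=
  l ≠ [] ∧ l.Nodup ∧ (l ++ l.take 1).Chain' adj

/-- Total auxiliary weight of a directed cycle (including the closing edge). -/
def cycleWeight {V : Type*} (W : V → V → ℝ) (l : List V) : ℝ :=
  walkWeight W (l ++ l.take 1)

/-- The underlying undirected edge of a dart of the auxiliary graph. -/
def undEdge : (α ⊕ β) × (α ⊕ β) → Option (α × β)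
  | (Sum.inl u, Sum.inr v) => some (u, v)
  | (Sum.inr v, Sum.inl u) => some (u, v)
  | _ => none

/-- The set of underlying edges of `G` used by a walk in the auxiliary graph. -/
def usedEdges [DecidableEq α] [DecidableEq β] (l : List (α ⊕ β)) : Finset (α × β) :=
  ((l.zip l.tail).filterMap undEdge).toFinset

/-- An edge set is a matching if every vertex appears at most once. -/
def IsMatching (μ : Finset (α × β)) : Prop :=
  ∀ e ∈ μ, ∀ f ∈ μ, (e.1 = f.1 ∨ e.2 = f.2) → e = f

/-- A perfect matching: a matching contained in `E` covering every vertex. -/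
def IsPerfectMatching (E μ : Finset (α × β)) : Prop :=
  μ ⊆ E ∧ IsMatching μ ∧ (∀ u : α, ∃ v : β, (u, v) ∈ μ) ∧ (∀ v : β, ∃ u : α, (u, v) ∈ μ)

/-- The weight of a matching. -/
def matchingWeight (w : α × β → ℝ) (μ : Finset (α × β)) : ℝ := ∑ e ∈ μ, w e

/-- A minimum-weight perfect matching. -/
def IsMinPerfectMatching (E : Finset (α × β)) (w : α × β → ℝ) (μ : Finset (α × β)) : Prop :=
  IsPerfectMatching E μ ∧
    ∀ ν : Finset (α × β), IsPerfectMatching E ν → matchingWeight w μ ≤ matchingWeight w ν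

/-- `p` is a potential for `(G_μ, w_μ)`: all reduced weights are nonnegative. -/
def IsPotential (E μ : Finset (α × β)) (w : α × β → ℝ) (p : α ⊕ β → ℝ) : Prop :=
  ∀ x y : α ⊕ β, auxAdj E μ x y → auxW w x y + p x - p y ≥ 0

variable {γ : Type*}

/-- The edge set of the dummy extension `G'`: the original edges of `G` together with an edge
from every vertex of `V⁺` to every dummy vertex (the dummy vertices form the type `γ`). -/
def extE [Fintype α] [Fintype γ] [DecidableEq α] [DecidableEq β] [DecidableEq γ]
    (E : Finset (α × β)) : Finset (α × (β ⊕ γ)) :=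
  E.image (fun e => (e.1, Sum.inl e.2)) ∪
    Finset.univ.image (fun p : α × γ => (p.1, Sum.inr p.2))

/-- The weights of the dummy extension: original weights on original edges, `0` on dummy edges. -/
def extW (w : α × β → ℝ) : α × (β ⊕ γ) → ℝ
  | (u, Sum.inl v) => w (u, v)
  | (_, Sum.inr _) => 0


/-!
Exchanging a perfect matching `μ` along an alternating cycle `C` gives a perfect matching of
weight `w(μ) + w_μ(C)`, so the auxiliary graph of a minimum-weight perfect matching has no
negative cycle; since `w̃'` differs from `w'` only at `s`, this persists for cycles avoiding `s`.

Take a cycle of minimum `w̃'`-weight and, among those, of minimum length, and suppose it passes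
through two dummy vertices. They cut it into two arcs, and as every edge into a dummy vertex has
weight `0`, the weight of the cycle is the sum of the weights of the arcs. Each arc closes up at
its dummy vertex into a shorter cycle of the same weight, unless it is a single matching edge,
of weight `0`. The arc avoiding `s` has weight `≥ 0`, so the other arc is a shorter cycle of no
larger weight, unless it is trivial; then the first arc is a shorter cycle of the same weight,
unless both arcs are trivial and the cycle has weight `0`.
-/

section CyclicLists

variable {V : Type*}

def cyclicDarts (l : List V) : List (V × V) := l.zip (l.rotate 1)

theorem List.zip_rotate {A B : Type*} (l₁ : List A) (l₂ : List B) (h : l₁.length = l₂.length)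
    (n : ℕ) : (l₁.rotate n).zip (l₂.rotate n) = (l₁.zip l₂).rotate n := by
  rcases eq_or_ne l₁ [] with rfl | h₁
  · simp [List.length_eq_zero_iff.1 h.symm]
  have hlen : (l₁.drop (n % l₁.length)).length = (l₂.drop (n % l₁.length)).length := by
    simp [h]
  rw [List.rotate_eq_drop_append_take_mod, List.rotate_eq_drop_append_take_mod (l := l₂),
    List.rotate_eq_drop_append_take_mod (l := l₁.zip l₂), List.length_zip, ← h, Nat.min_self,
    List.zip_append hlen]
  simp [List.zip_eq_zipWith, List.drop_zipWith, List.take_zipWith]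

theorem List.isChain_iff_forall_mem_zip_tail {adj : V → V → Prop} :
    ∀ {l : List V}, l.IsChain adj ↔ ∀ p ∈ l.zip l.tail, adj p.1 p.2
  | [] => by simp
  | [a] => by simp
  | a :: b :: t => by
    rw [List.isChain_cons_cons, List.isChain_iff_forall_mem_zip_tail]
    simp only [List.tail_cons, List.zip_cons_cons, List.mem_cons, forall_eq_or_imp]

theorem zip_tail_append_take_one {l : List V} (h : l ≠ []) :
    (l ++ l.take 1).zip (l ++ l.take 1).tail = cyclicDarts l := by
  obtain ⟨a, t, rfl⟩ := List.exists_cons_of_ne_nil h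
  have hlen : (a :: t).length = (t ++ [a]).length := by simp
  simpa [cyclicDarts, List.rotate_cons_succ] using List.zip_append (r₁ := [a]) (r₂ := []) hlen

theorem cycleWeight_eq_sum_cyclicDarts (W : V → V → ℝ) {l : List V} (h : l ≠ []) :
    cycleWeight W l = ((cyclicDarts l).map fun p => W p.1 p.2).sum := by
  rw [cycleWeight, walkWeight, zip_tail_append_take_one h]

theorem isDiCycle_iff_forall_cyclicDarts {adj : V → V → Prop} {l : List V} :
    IsDiCycle adj l ↔ l ≠ [] ∧ l.Nodup ∧ ∀ p ∈ cyclicDarts l, adj p.1 p.2 := by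
  refine ⟨fun ⟨h₁, h₂, h₃⟩ => ?_, fun ⟨h₁, h₂, h₃⟩ => ?_⟩
  · exact ⟨h₁, h₂, zip_tail_append_take_one h₁ ▸ List.isChain_iff_forall_mem_zip_tail.1 h₃⟩
  · exact ⟨h₁, h₂, List.isChain_iff_forall_mem_zip_tail.2 (zip_tail_append_take_one h₁ ▸ h₃)⟩

theorem cyclicDarts_rotate (l : List V) (n : ℕ) :
    cyclicDarts (l.rotate n) = (cyclicDarts l).rotate n := by
  rw [cyclicDarts, cyclicDarts, List.rotate_rotate, Nat.add_comm, ← List.rotate_rotate,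
    List.zip_rotate _ _ (List.length_rotate ..).symm]

theorem IsDiCycle.rotate {adj : V → V → Prop} {l : List V} (h : IsDiCycle adj l) (n : ℕ) :
    IsDiCycle adj (l.rotate n) := by
  obtain ⟨h₁, h₂, h₃⟩ := isDiCycle_iff_forall_cyclicDarts.1 h
  refine isDiCycle_iff_forall_cyclicDarts.2 ⟨by simpa using h₁, List.nodup_rotate.2 h₂, ?_⟩
  intro p hp
  rw [cyclicDarts_rotate, List.mem_rotate] at hp
  exact h₃ p hp

theorem cycleWeight_rotate (W : V → V → ℝ) {l : List V} (h : l ≠ []) (n : ℕ) :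
    cycleWeight W (l.rotate n) = cycleWeight W l := by
  rw [cycleWeight_eq_sum_cyclicDarts W (by simpa using h), cycleWeight_eq_sum_cyclicDarts W h,
    cyclicDarts_rotate, List.map_rotate]
  exact (List.rotate_perm _ n).sum_eq

theorem map_fst_cyclicDarts (l : List V) : (cyclicDarts l).map Prod.fst = l :=
  List.map_fst_zip (List.length_rotate ..).ge

theorem map_snd_cyclicDarts (l : List V) : (cyclicDarts l).map Prod.snd = l.rotate 1 :=
  List.map_snd_zip (List.length_rotate ..).le

theorem exists_cyclicDart_from {x : V} {l : List V} (hx : x ∈ l) :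
    ∃ y, (x, y) ∈ cyclicDarts l := by
  rw [← map_fst_cyclicDarts l, List.mem_map] at hx
  obtain ⟨p, hp, rfl⟩ := hx
  exact ⟨p.2, hp⟩

theorem exists_cyclicDart_to {x : V} {l : List V} (hx : x ∈ l) :
    ∃ y, (y, x) ∈ cyclicDarts l := by
  rw [← List.mem_rotate (n := 1), ← map_snd_cyclicDarts l, List.mem_map] at hx
  obtain ⟨p, hp, rfl⟩ := hx
  exact ⟨p.1, hp⟩

theorem fst_mem_of_mem_cyclicDarts {p : V × V} {l : List V} (hp : p ∈ cyclicDarts l) :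
    p.1 ∈ l :=
  (List.of_mem_zip hp).1

theorem snd_mem_of_mem_cyclicDarts {p : V × V} {l : List V} (hp : p ∈ cyclicDarts l) :
    p.2 ∈ l :=
  List.mem_rotate.1 (List.of_mem_zip hp).2

theorem eq_of_fst_eq_of_mem_cyclicDarts {l : List V} (h : l.Nodup) {p q : V × V}
    (hp : p ∈ cyclicDarts l) (hq : q ∈ cyclicDarts l) (hpq : p.1 = q.1) : p = q :=
  List.inj_on_of_nodup_map (by rwa [map_fst_cyclicDarts]) hp hq hpq

theorem eq_of_snd_eq_of_mem_cyclicDarts {l : List V} (h : l.Nodup) {p q : V × V}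
    (hp : p ∈ cyclicDarts l) (hq : q ∈ cyclicDarts l) (hpq : p.2 = q.2) : p = q :=
  List.inj_on_of_nodup_map (by rwa [map_snd_cyclicDarts, List.nodup_rotate]) hp hq hpq

theorem nodup_cyclicDarts {l : List V} (h : l.Nodup) : (cyclicDarts l).Nodup :=
  List.Nodup.of_map Prod.fst (by rwa [map_fst_cyclicDarts])

theorem finite_setOf_isDiCycle [Finite V] (adj : V → V → Prop) :
    {l : List V | IsDiCycle adj l}.Finite :=
  have := Fintype.ofFinite V
  (List.finite_length_le V (Fintype.card V)).subset fun _ hl => hl.2.1.length_le_card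

theorem exists_rotate_eq_cons_append_cons {l : List V} (hl : l.Nodup) {x y : V} (hx : x ∈ l)
    (hy : y ∈ l) (hxy : x ≠ y) (z : V) :
    ∃ n P Q, (l.rotate n = x :: P ++ y :: Q ∨ l.rotate n = y :: P ++ x :: Q) ∧ z ∉ P := by
  obtain ⟨P₀, P₁, rfl⟩ := List.append_of_mem hx
  have hrot : (P₀ ++ x :: P₁).rotate P₀.length = x :: (P₁ ++ P₀) := by
    rw [List.rotate_append_length_eq, List.cons_append]
  have hyr : y ∈ P₁ ++ P₀ := by
    have := (List.mem_rotate (n := P₀.length)).2 hy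
    rw [hrot] at this
    exact (List.mem_cons.1 this).resolve_left hxy.symm
  obtain ⟨P, Q, hPQ⟩ := List.append_of_mem hyr
  rw [hPQ] at hrot
  by_cases hzP : z ∈ P
  · have hnd : (x :: (P ++ y :: Q)).Nodup := hrot ▸ List.nodup_rotate.2 hl
    refine ⟨P₀.length + (P.length + 1), Q, P, Or.inr ?_, fun hzQ => ?_⟩
    · rw [← List.rotate_rotate, hrot]
      simp
    · exact List.disjoint_of_nodup_append (List.nodup_cons.1 hnd).2 hzP (List.mem_cons_of_mem y hzQ)
  · exact ⟨P₀.length, P, Q, Or.inl hrot, hzP⟩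

theorem walkWeight_cons_cons (W : V → V → ℝ) (a b : V) (t : List V) :
    walkWeight W (a :: b :: t) = W a b + walkWeight W (b :: t) := by
  simp [walkWeight]

theorem walkWeight_append_cons (W : V → V → ℝ) (x : V) (l₂ : List V) :
    ∀ l₁ : List V, walkWeight W (l₁ ++ x :: l₂) = walkWeight W (l₁ ++ [x]) + walkWeight W (x :: l₂)
  | [] => by simp [walkWeight]
  | [a] => by simp [walkWeight]
  | a :: b :: t => by
    simp only [List.cons_append, walkWeight_cons_cons]
    rw [← List.cons_append, walkWeight_append_cons W x l₂ (b :: t), add_assoc]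
    rfl

theorem walkWeight_append_singleton_of_forall_eq_zero (W : V → V → ℝ) {x : V}
    (hx : ∀ y, W y x = 0) : ∀ l : List V, walkWeight W (l ++ [x]) = walkWeight W l
  | [] => by simp [walkWeight]
  | [a] => by simp [walkWeight, hx]
  | a :: b :: t => by
    simp only [List.cons_append, walkWeight_cons_cons]
    rw [← List.cons_append, walkWeight_append_singleton_of_forall_eq_zero W hx (b :: t)]

theorem cycleWeight_cons_of_forall_eq_zero (W : V → V → ℝ) {x : V} (hx : ∀ y, W y x = 0)
    (l : List V) : cycleWeight W (x :: l) = walkWeight W (x :: l) :=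
  walkWeight_append_singleton_of_forall_eq_zero W hx (x :: l)

end CyclicLists

section Exchange

def forwardEdge : (α ⊕ β) × (α ⊕ β) → Option (α × β)
  | (Sum.inl u, Sum.inr v) => some (u, v)
  | _ => none

def backwardEdge : (α ⊕ β) × (α ⊕ β) → Option (α × β)
  | (Sum.inr v, Sum.inl u) => some (u, v)
  | _ => none

theorem forwardEdge_eq_some {p : (α ⊕ β) × (α ⊕ β)} {e : α × β} :
    forwardEdge p = some e ↔ p = (Sum.inl e.1, Sum.inr e.2) := by
  rcases p with ⟨_ | _, _ | _⟩ <;> simp [forwardEdge, Prod.ext_iff, eq_comm]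

theorem backwardEdge_eq_some {p : (α ⊕ β) × (α ⊕ β)} {e : α × β} :
    backwardEdge p = some e ↔ p = (Sum.inr e.2, Sum.inl e.1) := by
  rcases p with ⟨_ | _, _ | _⟩ <;> simp [backwardEdge, Prod.ext_iff, eq_comm, and_comm]

theorem sum_auxW_eq_sub (w : α × β → ℝ) (ds : List ((α ⊕ β) × (α ⊕ β))) :
    (ds.map fun p => auxW w p.1 p.2).sum =
      ((ds.filterMap forwardEdge).map w).sum - ((ds.filterMap backwardEdge).map w).sum := by
  induction ds with
  | nil => simp
  | cons p ds ih =>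
    rw [List.map_cons, List.sum_cons, ih]
    rcases p with ⟨_ | _, _ | _⟩ <;>
      simp [List.filterMap_cons, forwardEdge, backwardEdge, auxW] <;> ring

variable {E μ : Finset (α × β)}

theorem auxAdj_inl_left {u : α} {y : α ⊕ β} (h : auxAdj E μ (Sum.inl u) y) :
    ∃ v, y = Sum.inr v ∧ (u, v) ∈ E ∧ (u, v) ∉ μ := by
  cases y with
  | inl _ => exact h.elim
  | inr v => exact ⟨v, rfl, h⟩

theorem auxAdj_inr_left {v : β} {y : α ⊕ β} (h : auxAdj E μ (Sum.inr v) y) :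
    ∃ u, y = Sum.inl u ∧ (u, v) ∈ μ := by
  cases y with
  | inl u => exact ⟨u, rfl, h⟩
  | inr _ => exact h.elim

theorem auxAdj_inl_right {u : α} {x : α ⊕ β} (h : auxAdj E μ x (Sum.inl u)) :
    ∃ v, x = Sum.inr v ∧ (u, v) ∈ μ := by
  cases x with
  | inl _ => exact h.elim
  | inr v => exact ⟨v, rfl, h⟩

theorem auxAdj_inr_right {v : β} {x : α ⊕ β} (h : auxAdj E μ x (Sum.inr v)) :
    ∃ u, x = Sum.inl u ∧ (u, v) ∈ E ∧ (u, v) ∉ μ := by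
  cases x with
  | inl u => exact ⟨u, rfl, h⟩
  | inr _ => exact h.elim

variable [DecidableEq α] [DecidableEq β]

def forwardEdges (l : List (α ⊕ β)) : Finset (α × β) :=
  ((cyclicDarts l).filterMap forwardEdge).toFinset

def backwardEdges (l : List (α ⊕ β)) : Finset (α × β) :=
  ((cyclicDarts l).filterMap backwardEdge).toFinset

/-- The symmetric difference `μ Δ C`. -/
def exchange (μ : Finset (α × β)) (l : List (α ⊕ β)) : Finset (α × β) :=
  μ \ backwardEdges l ∪ forwardEdges l

theorem mem_forwardEdges {l : List (α ⊕ β)} {u : α} {v : β} :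
    (u, v) ∈ forwardEdges l ↔ (Sum.inl u, Sum.inr v) ∈ cyclicDarts l := by
  simp only [forwardEdges, List.mem_toFinset, List.mem_filterMap, forwardEdge_eq_some,
    exists_eq_right]

theorem mem_backwardEdges {l : List (α ⊕ β)} {u : α} {v : β} :
    (u, v) ∈ backwardEdges l ↔ (Sum.inr v, Sum.inl u) ∈ cyclicDarts l := by
  simp only [backwardEdges, List.mem_toFinset, List.mem_filterMap, backwardEdge_eq_some,
    exists_eq_right]

variable {l : List (α ⊕ β)}

theorem IsDiCycle.forwardEdges_subset_sdiff (hl : IsDiCycle (auxAdj E μ) l) :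
    forwardEdges l ⊆ E \ μ := by
  rintro ⟨u, v⟩ he
  exact Finset.mem_sdiff.2 ((isDiCycle_iff_forall_cyclicDarts.1 hl).2.2 _ (mem_forwardEdges.1 he))

theorem IsDiCycle.backwardEdges_subset (hl : IsDiCycle (auxAdj E μ) l) :
    backwardEdges l ⊆ μ := by
  rintro ⟨u, v⟩ he
  exact (isDiCycle_iff_forall_cyclicDarts.1 hl).2.2 _ (mem_backwardEdges.1 he)

theorem IsDiCycle.mem_backwardEdges_of_mem (hl : IsDiCycle (auxAdj E μ) l) (hμ : IsMatching μ)
    {u : α} {v : β} (huv : (u, v) ∈ μ) (h : Sum.inl u ∈ l ∨ Sum.inr v ∈ l) :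
    (u, v) ∈ backwardEdges l := by
  have hadj := (isDiCycle_iff_forall_cyclicDarts.1 hl).2.2
  rcases h with hu | hv
  · obtain ⟨y, hy⟩ := exists_cyclicDart_to hu
    obtain ⟨v', rfl, hv'⟩ := auxAdj_inl_right (hadj _ hy)
    obtain rfl : v' = v := congrArg Prod.snd (hμ _ hv' _ huv (Or.inl rfl))
    exact mem_backwardEdges.2 hy
  · obtain ⟨y, hy⟩ := exists_cyclicDart_from hv
    obtain ⟨u', rfl, hu'⟩ := auxAdj_inr_left (hadj _ hy)
    obtain rfl : u' = u := congrArg Prod.fst (hμ _ hu' _ huv (Or.inr rfl))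
    exact mem_backwardEdges.2 hy

theorem IsDiCycle.isMatching_exchange (hl : IsDiCycle (auxAdj E μ) l) (hμ : IsMatching μ) :
    IsMatching (exchange μ l) := by
  have hnd := hl.2.1
  have hkept : ∀ e ∈ μ \ backwardEdges l, ∀ f ∈ forwardEdges l, ¬(e.1 = f.1 ∨ e.2 = f.2) := by
    rintro ⟨u, v⟩ he ⟨u', v'⟩ hf (rfl | rfl) <;>
      obtain ⟨heμ, heC⟩ := Finset.mem_sdiff.1 he <;>
      have hfC := mem_forwardEdges.1 hf
    · exact heC (hl.mem_backwardEdges_of_mem hμ heμ (Or.inl (fst_mem_of_mem_cyclicDarts hfC)))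
    · exact heC (hl.mem_backwardEdges_of_mem hμ heμ (Or.inr (snd_mem_of_mem_cyclicDarts hfC)))
  intro e he f hf hef
  rcases Finset.mem_union.1 he with he | he <;> rcases Finset.mem_union.1 hf with hf | hf
  · exact hμ e (Finset.mem_sdiff.1 he).1 f (Finset.mem_sdiff.1 hf).1 hef
  · exact (hkept e he f hf hef).elim
  · exact (hkept f hf e he (hef.imp Eq.symm Eq.symm)).elim
  · obtain ⟨u, v⟩ := e
    obtain ⟨u', v'⟩ := f
    have he' := mem_forwardEdges.1 he
    have hf' := mem_forwardEdges.1 hf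
    rcases hef with rfl | rfl
    · simpa using eq_of_fst_eq_of_mem_cyclicDarts hnd he' hf' rfl
    · simpa using eq_of_snd_eq_of_mem_cyclicDarts hnd he' hf' rfl

theorem IsDiCycle.isPerfectMatching_exchange (hl : IsDiCycle (auxAdj E μ) l)
    (hμ : IsPerfectMatching E μ) : IsPerfectMatching E (exchange μ l) := by
  obtain ⟨hμE, hμ, hcovα, hcovβ⟩ := hμ
  have hadj := (isDiCycle_iff_forall_cyclicDarts.1 hl).2.2
  refine ⟨Finset.union_subset (Finset.sdiff_subset.trans hμE)
    (hl.forwardEdges_subset_sdiff.trans Finset.sdiff_subset), hl.isMatching_exchange hμ,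
    fun u => ?_, fun v => ?_⟩
  · by_cases hu : Sum.inl u ∈ l
    · obtain ⟨y, hy⟩ := exists_cyclicDart_from hu
      obtain ⟨v, rfl, -⟩ := auxAdj_inl_left (hadj _ hy)
      exact ⟨v, Finset.mem_union_right _ (mem_forwardEdges.2 hy)⟩
    · obtain ⟨v, hv⟩ := hcovα u
      refine ⟨v, Finset.mem_union_left _ (Finset.mem_sdiff.2 ⟨hv, fun hC => hu ?_⟩)⟩
      exact snd_mem_of_mem_cyclicDarts (mem_backwardEdges.1 hC)
  · by_cases hv : Sum.inr v ∈ l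
    · obtain ⟨y, hy⟩ := exists_cyclicDart_to hv
      obtain ⟨u, rfl, -⟩ := auxAdj_inr_right (hadj _ hy)
      exact ⟨u, Finset.mem_union_right _ (mem_forwardEdges.2 hy)⟩
    · obtain ⟨u, hu⟩ := hcovβ v
      refine ⟨u, Finset.mem_union_left _ (Finset.mem_sdiff.2 ⟨hu, fun hC => hv ?_⟩)⟩
      exact fst_mem_of_mem_cyclicDarts (mem_backwardEdges.1 hC)

theorem IsDiCycle.matchingWeight_exchange (hl : IsDiCycle (auxAdj E μ) l) (w : α × β → ℝ) :
    matchingWeight w (exchange μ l) = matchingWeight w μ + cycleWeight (auxW w) l := by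
  have hdarts := nodup_cyclicDarts hl.2.1
  have hdisj : Disjoint (μ \ backwardEdges l) (forwardEdges l) :=
    (Finset.disjoint_sdiff.mono_left Finset.sdiff_subset).mono_right hl.forwardEdges_subset_sdiff
  have hfwd : ((cyclicDarts l).filterMap forwardEdge).Nodup :=
    hdarts.filterMap fun _ _ _ h h' =>
      (forwardEdge_eq_some.1 h).trans (forwardEdge_eq_some.1 h').symm
  have hbwd : ((cyclicDarts l).filterMap backwardEdge).Nodup :=
    hdarts.filterMap fun _ _ _ h h' =>
      (backwardEdge_eq_some.1 h).trans (backwardEdge_eq_some.1 h').symm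
  rw [exchange, matchingWeight, matchingWeight, Finset.sum_union hdisj,
    Finset.sum_sdiff_eq_sub hl.backwardEdges_subset, forwardEdges, backwardEdges,
    List.sum_toFinset _ hfwd, List.sum_toFinset _ hbwd,
    cycleWeight_eq_sum_cyclicDarts _ hl.1, sum_auxW_eq_sub]
  ring

end Exchange

section DummyVertices

variable {E μ : Finset (α × β)} {w tw : α × β → ℝ}

theorem IsMinPerfectMatching.cycleWeight_nonneg {l : List (α ⊕ β)}
    (hμ : IsMinPerfectMatching E w μ) (hl : IsDiCycle (auxAdj E μ) l) :
    0 ≤ cycleWeight (auxW w) l := by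
  classical
  have := hμ.2 _ (hl.isPerfectMatching_exchange hμ.1)
  rw [hl.matchingWeight_exchange] at this
  linarith

def IsDummyVertex (E : Finset (α × β)) (tw : α × β → ℝ) (b : β) : Prop :=
  ∀ u, (u, b) ∈ E ∧ tw (u, b) = 0

theorem IsDummyVertex.auxW_eq_zero {b : β} (hb : IsDummyVertex E tw b) (x : α ⊕ β) :
    auxW tw x (Sum.inr b) = 0 := by
  cases x with
  | inl u => exact (hb u).2
  | inr _ => rfl

theorem cycleWeight_eq_of_not_mem {s : α} (hμE : μ ⊆ E) (htw : ∀ e ∈ E, e.1 ≠ s → tw e = w e)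
    {l : List (α ⊕ β)} (hl : IsDiCycle (auxAdj E μ) l) (hs : Sum.inl s ∉ l) :
    cycleWeight (auxW tw) l = cycleWeight (auxW w) l := by
  obtain ⟨hne, -, hadj⟩ := isDiCycle_iff_forall_cyclicDarts.1 hl
  rw [cycleWeight_eq_sum_cyclicDarts _ hne, cycleWeight_eq_sum_cyclicDarts _ hne]
  refine congrArg List.sum (List.map_congr_left fun p hp => ?_)
  rcases p with ⟨u | v, u' | v'⟩
  · rfl
  · exact htw (u, v') (hadj _ hp).1 fun h => hs (h ▸ fst_mem_of_mem_cyclicDarts hp)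
  · exact congrArg Neg.neg
      (htw (u', v) (hμE (hadj _ hp)) fun h => hs (h ▸ snd_mem_of_mem_cyclicDarts hp))
  · rfl

theorem isDiCycle_or_eq_singleton_of_arc (hμ : IsMatching μ) {b c : β} (hb : ∀ u, (u, b) ∈ E)
    {P : List (α ⊕ β)} (hch : (Sum.inr b :: P ++ [Sum.inr c]).IsChain (auxAdj E μ))
    (hnd : (Sum.inr b :: P).Nodup) :
    IsDiCycle (auxAdj E μ) (Sum.inr b :: P) ∨ ∃ a, P = [Sum.inl a] := by
  obtain rfl | ⟨P₀, x, rfl⟩ := P.eq_nil_or_concat'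
  · exact (List.isChain_pair.1 hch).elim
  have hlast : (Sum.inr b :: (P₀ ++ [x])).getLast? = some x := by
    rw [← List.cons_append, List.getLast?_concat]
  rw [List.isChain_append] at hch
  obtain ⟨a, rfl, -⟩ := auxAdj_inr_right (hch.2.2 x (hlast ▸ rfl) _ rfl)
  by_cases hab : (a, b) ∈ μ
  · refine Or.inr ⟨a, ?_⟩
    cases P₀ with
    | nil => rfl
    | cons y P₁ =>
      obtain ⟨u, rfl, hub⟩ := auxAdj_inr_left (List.isChain_cons_cons.1 hch.1).1
      obtain rfl : u = a := congrArg Prod.fst (hμ _ hub _ hab (Or.inr rfl))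
      exact ((List.nodup_cons.1 (List.nodup_cons.1 hnd).2).1 (by simp)).elim
  · refine Or.inl ⟨List.cons_ne_nil _ _, hnd, List.isChain_append.2
      ⟨hch.1, List.isChain_singleton _, fun x hx y hy => ?_⟩⟩
    rw [hlast, Option.mem_some_iff] at hx
    simp only [List.take_succ_cons, List.take_zero, List.head?_cons, Option.mem_some_iff] at hy
    subst hx hy
    exact ⟨hb a, hab⟩

theorem exists_shorter_cycle_of_arcs {s : α} (hμ : IsMinPerfectMatching E w μ)
    (htw : ∀ e ∈ E, e.1 ≠ s → tw e = w e) {b₁ b₂ : β} (hb₁ : IsDummyVertex E tw b₁)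
    (hb₂ : IsDummyVertex E tw b₂) {P Q : List (α ⊕ β)}
    (hC : IsDiCycle (auxAdj E μ) (Sum.inr b₁ :: P ++ Sum.inr b₂ :: Q))
    (hneg : cycleWeight (auxW tw) (Sum.inr b₁ :: P ++ Sum.inr b₂ :: Q) < 0)
    (hsP : Sum.inl s ∉ P) :
    ∃ C, IsDiCycle (auxAdj E μ) C ∧ C.length < (Sum.inr b₁ :: P ++ Sum.inr b₂ :: Q).length ∧
      cycleWeight (auxW tw) C ≤ cycleWeight (auxW tw) (Sum.inr b₁ :: P ++ Sum.inr b₂ :: Q) := by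
  obtain ⟨-, hnd, hch⟩ := hC
  have hclosed : (Sum.inr b₁ :: P ++ Sum.inr b₂ :: Q) ++ (Sum.inr b₁ :: P ++ Sum.inr b₂ :: Q).take 1
      = Sum.inr b₁ :: P ++ Sum.inr b₂ :: (Q ++ [Sum.inr b₁]) := by
    simp
  rw [List.Chain', hclosed, List.isChain_split] at hch
  have harc₁ := isDiCycle_or_eq_singleton_of_arc hμ.1.2.1 (fun u => (hb₁ u).1) hch.1
    (List.nodup_append.1 hnd).1
  have harc₂ := isDiCycle_or_eq_singleton_of_arc hμ.1.2.1 (fun u => (hb₂ u).1) hch.2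
    (List.nodup_append.1 hnd).2.1
  have hweight : cycleWeight (auxW tw) (Sum.inr b₁ :: P ++ Sum.inr b₂ :: Q) =
      walkWeight (auxW tw) (Sum.inr b₁ :: P) + walkWeight (auxW tw) (Sum.inr b₂ :: Q) := by
    rw [cycleWeight, hclosed, walkWeight_append_cons,
      walkWeight_append_singleton_of_forall_eq_zero _ hb₂.auxW_eq_zero, ← List.cons_append,
      walkWeight_append_singleton_of_forall_eq_zero _ hb₁.auxW_eq_zero]
  have htrivial : ∀ {b : β} {P : List (α ⊕ β)}, IsDummyVertex E tw b → (∃ a, P = [Sum.inl a]) →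
      walkWeight (auxW tw) (Sum.inr b :: P) = 0 := by
    rintro b _ hb ⟨a, rfl⟩
    simp [walkWeight, auxW, (hb a).2]
  have hA₁ : 0 ≤ walkWeight (auxW tw) (Sum.inr b₁ :: P) := by
    rcases harc₁ with hcyc | htriv
    · rw [← cycleWeight_cons_of_forall_eq_zero _ hb₁.auxW_eq_zero,
        cycleWeight_eq_of_not_mem hμ.1.1 htw hcyc (by simpa using hsP)]
      exact hμ.cycleWeight_nonneg hcyc
    · exact (htrivial hb₁ htriv).ge
  rcases harc₂ with hcyc₂ | htriv₂
  · refine ⟨_, hcyc₂, by simp, ?_⟩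
    rw [cycleWeight_cons_of_forall_eq_zero _ hb₂.auxW_eq_zero, hweight]
    linarith
  rcases harc₁ with hcyc₁ | htriv₁
  · refine ⟨_, hcyc₁, by simp, ?_⟩
    rw [cycleWeight_cons_of_forall_eq_zero _ hb₁.auxW_eq_zero, hweight, htrivial hb₂ htriv₂,
      add_zero]
  · rw [hweight, htrivial hb₁ htriv₁, htrivial hb₂ htriv₂, add_zero] at hneg
    exact (lt_irrefl 0 hneg).elim

theorem exists_shorter_cycle {s : α} (hμ : IsMinPerfectMatching E w μ)
    (htw : ∀ e ∈ E, e.1 ≠ s → tw e = w e) {b₁ b₂ : β} (hb₁ : IsDummyVertex E tw b₁)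
    (hb₂ : IsDummyVertex E tw b₂) (hne : b₁ ≠ b₂) {C : List (α ⊕ β)}
    (hC : IsDiCycle (auxAdj E μ) C) (hneg : cycleWeight (auxW tw) C < 0)
    (h₁ : Sum.inr b₁ ∈ C) (h₂ : Sum.inr b₂ ∈ C) :
    ∃ C', IsDiCycle (auxAdj E μ) C' ∧ C'.length < C.length ∧
      cycleWeight (auxW tw) C' ≤ cycleWeight (auxW tw) C := by
  obtain ⟨n, P, Q, hrot, hsP⟩ :=
    exists_rotate_eq_cons_append_cons hC.2.1 h₁ h₂ (Sum.inr_injective.ne hne) (Sum.inl s)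
  suffices ∃ C', IsDiCycle (auxAdj E μ) C' ∧ C'.length < (C.rotate n).length ∧
      cycleWeight (auxW tw) C' ≤ cycleWeight (auxW tw) (C.rotate n) by
    rwa [List.length_rotate, cycleWeight_rotate _ hC.1] at this
  have hneg' : cycleWeight (auxW tw) (C.rotate n) < 0 := by rwa [cycleWeight_rotate _ hC.1]
  rcases hrot with hrot | hrot <;> rw [hrot] at hneg' ⊢
  · exact exists_shorter_cycle_of_arcs hμ htw hb₁ hb₂ (hrot ▸ hC.rotate n) hneg' hsP
  · exact exists_shorter_cycle_of_arcs hμ htw hb₂ hb₁ (hrot ▸ hC.rotate n) hneg' hsP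

end DummyVertices

theorem isDummyVertex_extE [Fintype α] [Fintype γ] [DecidableEq α] [DecidableEq β]
    [DecidableEq γ] (E : Finset (α × β)) {tw : α × (β ⊕ γ) → ℝ}
    (htw : ∀ u d, tw (u, Sum.inr d) = 0) (d : γ) :
    IsDummyVertex (extE (γ := γ) E) tw (Sum.inr d) := fun u =>
  ⟨Finset.mem_union_right _ (Finset.mem_image.2 ⟨(u, d), Finset.mem_univ _, rfl⟩), htw u d⟩

theorem min_negative_cycle_few_dummies_general
    [Fintype α] [Fintype β] [Fintype γ] [DecidableEq α] [DecidableEq β] [DecidableEq γ]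
    (E : Finset (α × β)) (w : α × β → ℝ) (μ' : Finset (α × (β ⊕ γ))) (s : α)
    (tw : α × (β ⊕ γ) → ℝ)
    (hμ' : IsMinPerfectMatching (extE (γ := γ) E) (extW w) μ')
    (htw : ∀ e ∈ extE (γ := γ) E, e.1 ≠ s → tw e = extW w e)
    (htwd : ∀ (u : α) (d : γ), tw (u, Sum.inr d) = 0)
    (hneg : ∃ C : List (α ⊕ (β ⊕ γ)),
      IsDiCycle (auxAdj (extE (γ := γ) E) μ') C ∧ cycleWeight (auxW tw) C < 0) :
    ∃ C : List (α ⊕ (β ⊕ γ)), IsDiCycle (auxAdj (extE (γ := γ) E) μ') C ∧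
      (∀ C' : List (α ⊕ (β ⊕ γ)), IsDiCycle (auxAdj (extE (γ := γ) E) μ') C' →
        cycleWeight (auxW tw) C ≤ cycleWeight (auxW tw) C') ∧
      ∀ d₁ d₂ : γ, Sum.inr (Sum.inr d₁) ∈ C → Sum.inr (Sum.inr d₂) ∈ C → d₁ = d₂ := by
  obtain ⟨C₀, hC₀, hC₀neg⟩ := hneg
  obtain ⟨C, hC, hCmin⟩ := Set.exists_min_image _
    (fun l => toLex (cycleWeight (auxW tw) l, l.length))
    (finite_setOf_isDiCycle (auxAdj (extE (γ := γ) E) μ')) ⟨C₀, hC₀⟩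
  have hweight : ∀ C', IsDiCycle (auxAdj (extE (γ := γ) E) μ') C' →
      cycleWeight (auxW tw) C ≤ cycleWeight (auxW tw) C' :=
    fun C' hC' => Prod.Lex.monotone_fst _ _ (hCmin C' hC')
  refine ⟨C, hC, hweight, fun d₁ d₂ h₁ h₂ => by_contra fun hne => ?_⟩
  obtain ⟨C', hC', hlen, hle⟩ := exists_shorter_cycle hμ' htw (isDummyVertex_extE E htwd d₁)
    (isDummyVertex_extE E htwd d₂) (Sum.inr_injective.ne hne) hC
    ((hweight C₀ hC₀).trans_lt hC₀neg) h₁ h₂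
  refine (hCmin C' hC').not_gt (Prod.Lex.toLex_lt_toLex.2 ?_)
  exact hle.lt_or_eq.imp_right fun h => ⟨h, hlen⟩

/-- Let `|V⁺| > |V⁻|`, let `w` be nonpositive, let `(G', w')` be the dummy
extension (with `|V⁺| − |V⁻|` dummy vertices, each joined to all of `V⁺` by weight-`0` edges),
let `μ'` be a minimum-weight perfect matching in `(G', w')`, `s ∈ V⁺`, and let `w̃'` agree with
`w'` on every edge not incident to `s` (all dummy edges keeping weight `0`). If
`(G'_{μ'}, w̃'_{μ'})` contains a negative cycle, then it contains a minimum-weight cycle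
intersecting at most one dummy vertex. -/
theorem min_negative_cycle_few_dummies
    [Fintype α] [Fintype β] [Fintype γ] [DecidableEq α] [DecidableEq β] [DecidableEq γ]
    (E : Finset (α × β)) (w : α × β → ℝ) (μ' : Finset (α × (β ⊕ γ))) (s : α)
    (tw : α × (β ⊕ γ) → ℝ)
    (hbal : Fintype.card β < Fintype.card α)
    (hγ : Fintype.card γ = Fintype.card α - Fintype.card β)
    (hw : ∀ e ∈ E, w e ≤ 0)
    (hμ' : IsMinPerfectMatching (extE (γ := γ) E) (extW w) μ')
    (htw : ∀ e ∈ extE (γ := γ) E, e.1 ≠ s → tw e = extW w e)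
    (htwd : ∀ (u : α) (d : γ), tw (u, Sum.inr d) = 0)
    (hneg : ∃ C : List (α ⊕ (β ⊕ γ)),
      IsDiCycle (auxAdj (extE (γ := γ) E) μ') C ∧ cycleWeight (auxW tw) C < 0) :
    ∃ C : List (α ⊕ (β ⊕ γ)), IsDiCycle (auxAdj (extE (γ := γ) E) μ') C ∧
      (∀ C' : List (α ⊕ (β ⊕ γ)), IsDiCycle (auxAdj (extE (γ := γ) E) μ') C' →
        cycleWeight (auxW tw) C ≤ cycleWeight (auxW tw) C') ∧
      ∀ d₁ d₂ : γ, Sum.inr (Sum.inr d₁) ∈ C → Sum.inr (Sum.inr d₂) ∈ C → d₁ = d₂ :=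
  min_negative_cycle_few_dummies_general E w μ' s tw hμ' htw htwd hneg
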